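/- arXiv:2002.12423 — 4 statements merged into one kernel-verified Lean document; each statement's English description precedes it below -/
import Mathlib

section
/- Let E be a Banach space. If E fails the Schur property, then E contains a weakly null basic sequence that is bounded away from 0 and has no subsequence equivalent to the canonical basis of ℓ₁. -/
open Filter Metric

lemma mazur_step {E : Type*} [NormedAddCommGroup E] [NormedSpace ℝ E] [CompleteSpace E]
    (w : ℕ → E)
    (hwk : ∀ φ : E →L[ℝ] ℝ, Tendsto (fun n => φ (w n)) atTop (nhds 0))
    {δ : ℝ} (hδ : 0 < δ) (hfreq : ∀ N, ∃ n ≥ N, δ ≤ ‖w n‖)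
    (F : Submodule ℝ E) [FiniteDimensional ℝ F]
    {ε : ℝ} (hε : 0 < ε) (hε1 : ε ≤ 1) (N : ℕ) :
    ∃ n ≥ N, δ ≤ ‖w n‖ ∧ ∀ y ∈ F, ∀ lam : ℝ, ‖y‖ ≤ (1 + ε) * ‖y + lam • w n‖ := by
  classical
  have hcomp : IsCompact (sphere (0 : F) 1) := isCompact_sphere _ _
  have hε8 : (0:ℝ) < ε / 8 := by linarith
  obtain ⟨T, hT⟩ := hcomp.elim_finite_subcover (fun y : F => ball y (ε/8))
    (fun _ => isOpen_ball) (fun z hz => Set.mem_iUnion.mpr ⟨z, mem_ball_self hε8⟩)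
  let f : F → (E →L[ℝ] ℝ) := fun y =>
    if h : (y : E) ≠ 0 then Classical.choose (exists_dual_vector ℝ (y : E) (norm_ne_zero_iff.mpr h)) else 0
  have hfspec : ∀ y : F, (y : E) ≠ 0 → ‖f y‖ = 1 ∧ f y (y : E) = ‖(y : E)‖ := by
    intro y h
    have := Classical.choose_spec (exists_dual_vector ℝ (y : E) (norm_ne_zero_iff.mpr h))
    simp only [f, dif_pos h]
    exact_mod_cast this
  set η : ℝ := ε * δ / 16 with hηdef
  have hη : 0 < η := by positivity
  have hev : ∀ᶠ n in atTop, ∀ y ∈ T, |f y (w n)| < η := by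
    rw [Filter.eventually_all_finset]
    intro y _
    have := (hwk (f y)).eventually (eventually_abs_sub_lt 0 hη)
    simpa using this
  have hfr : ∃ᶠ n in atTop, δ ≤ ‖w n‖ := Filter.frequently_atTop.mpr hfreq
  obtain ⟨n, hnN, hδn, hsmall⟩ := Filter.frequently_atTop.mp (hfr.and_eventually hev) N
  -- unit vector estimate
  have key : ∀ y : E, y ∈ F → ‖y‖ = 1 → ∀ μ : ℝ, 1 - 3*ε/8 ≤ ‖y + μ • w n‖ := by
    intro y hyF hy1 μ
    by_cases hμ : 2/δ ≤ |μ|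
    · have h2 : 2 ≤ |μ| * δ := by
        rw [div_le_iff₀ hδ] at hμ; linarith
      have h3 : |μ| * δ ≤ |μ| * ‖w n‖ := by
        apply mul_le_mul_of_nonneg_left hδn (abs_nonneg μ)
      have h4 : ‖μ • w n‖ - ‖y‖ ≤ ‖y + μ • w n‖ := by
        have := norm_add_le (y + μ • w n) (-y)
        simp only [add_neg_cancel_comm, norm_neg] at this
        linarith
      rw [norm_smul, Real.norm_eq_abs] at h4
      nlinarith [norm_nonneg (y + μ • w n)]
    · push_neg at hμ
      set yF : F := ⟨y, hyF⟩ with hyFdef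
      have hyS : yF ∈ sphere (0 : F) 1 := by
        simp [mem_sphere, dist_zero_right, Submodule.coe_norm, hy1]; exact hy1
      obtain ⟨i, hiT, hyi⟩ := Set.mem_iUnion₂.mp (hT hyS)
      have hdist : ‖y - (i : E)‖ < ε / 8 := by
        have : ‖yF - i‖ < ε / 8 := by simpa [dist_eq_norm] using hyi
        simpa [Submodule.coe_norm] using this
      have hni : (1:ℝ) - ε/8 ≤ ‖(i : E)‖ := by
        have := norm_sub_norm_le y (i : E)
        rw [hy1] at this
        linarith [abs_le.mp (le_refl |‖y‖ - ‖(i:E)‖|)]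
      have hne : (i : E) ≠ 0 := by
        intro h
        rw [h, norm_zero] at hni
        linarith
      obtain ⟨hf1, hf2⟩ := hfspec i hne
      have hwn : |f i (w n)| < η := hsmall i hiT
      have hfy : f i y = f i (i : E) + f i (y - (i : E)) := by
        rw [← map_add]; congr 1; abel
      have hbd1 : |f i (y - (i : E))| ≤ ‖y - (i : E)‖ := by
        calc |f i (y - (i : E))| ≤ ‖f i‖ * ‖y - (i : E)‖ := (f i).le_opNorm _
          _ = ‖y - (i : E)‖ := by rw [hf1, one_mul]
      have hbd2 : f i (y + μ • w n) ≤ ‖y + μ • w n‖ := by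
        calc f i (y + μ • w n) ≤ |f i (y + μ • w n)| := le_abs_self _
          _ ≤ ‖f i‖ * ‖y + μ • w n‖ := (f i).le_opNorm _
          _ = ‖y + μ • w n‖ := by rw [hf1, one_mul]
      have hexp : f i (y + μ • w n) = f i (i : E) + f i (y - (i : E)) + μ * f i (w n) := by
        rw [map_add, map_smul, smul_eq_mul, hfy]
      have habs1 : -(ε/8) ≤ f i (y - (i : E)) := by
        linarith [neg_abs_le (f i (y - (i:E))), hbd1, hdist]
      have habs2 : -(ε/8) ≤ μ * f i (w n) := by
        have h1 : |μ * f i (w n)| ≤ (2/δ) * η := by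
          rw [abs_mul]
          apply mul_le_mul hμ.le hwn.le (abs_nonneg _) (by positivity)
        have h2 : (2/δ) * η = ε/8 := by
          rw [hηdef]; field_simp; ring
        linarith [neg_abs_le (μ * f i (w n)), h1.trans h2.le]
      rw [hf2] at hexp
      linarith [hexp ▸ hbd2]
  refine ⟨n, hnN, hδn, ?_⟩
  intro y hyF lam
  rcases eq_or_ne y 0 with rfl | hy0
  · simp only [norm_zero]
    positivity
  · have hr : 0 < ‖y‖ := norm_pos_iff.mpr hy0
    have hunit : ‖(‖y‖⁻¹ • y)‖ = 1 := by
      rw [norm_smul, norm_inv, norm_norm, inv_mul_cancel₀ hr.ne']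
    have hk := key (‖y‖⁻¹ • y) (F.smul_mem _ hyF) hunit (‖y‖⁻¹ * lam)
    have heq : ‖y‖⁻¹ • y + (‖y‖⁻¹ * lam) • w n = ‖y‖⁻¹ • (y + lam • w n) := by
      rw [smul_add, mul_smul]
    rw [heq, norm_smul, norm_inv, norm_norm] at hk
    have h38 : (1 - 3*ε/8) * (1 + ε) ≥ 1 := by nlinarith
    have hin : ‖y‖ * (‖y‖⁻¹ * ‖y + lam • w n‖) = ‖y + lam • w n‖ := by
      field_simp
    nlinarith [mul_le_mul_of_nonneg_left hk hr.le, norm_nonneg (y + lam • w n), hr]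

/-- forward implication: if a Banach space `E` fails the Schur property
(there is a weakly convergent sequence not converging in norm), then `E` contains a
weakly null basic sequence which is bounded away from 0 and has no subsequence
equivalent to the canonical basis of ℓ₁.  Basic-ness is expressed by the standard
basis-constant inequality for initial sums. -/
theorem stmt3 {E : Type*} [NormedAddCommGroup E] [NormedSpace ℝ E] [CompleteSpace E]
    (u : ℕ → E) (x : E)
    (hw : ∀ φ : E →L[ℝ] ℝ, Filter.Tendsto (fun n => φ (u n)) Filter.atTop (nhds (φ x)))
    (hnot : ¬ Filter.Tendsto (fun n => ‖u n - x‖) Filter.atTop (nhds 0)) :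
    ∃ v : ℕ → E,
      (∀ φ : E →L[ℝ] ℝ, Filter.Tendsto (fun n => φ (v n)) Filter.atTop (nhds 0)) ∧
      (∃ δ > (0:ℝ), ∀ n, δ ≤ ‖v n‖) ∧
      (∃ K ≥ (1:ℝ), ∀ (m : ℕ) (a : Fin m → ℝ) (n : ℕ), n ≤ m →
        ‖∑ i : Fin m, if (i : ℕ) < n then a i • v i else 0‖ ≤ K * ‖∑ i : Fin m, a i • v i‖) ∧
      ¬ ∃ φ : ℕ → ℕ, StrictMono φ ∧ ∃ c > (0:ℝ), ∃ C > (0:ℝ),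
          ∀ (l : ℕ) (lam : Fin l → ℝ),
            c * ∑ k, |lam k| ≤ ‖∑ k, lam k • v (φ k)‖ ∧
            ‖∑ k, lam k • v (φ k)‖ ≤ C * ∑ k, |lam k| := by
  classical
  set w : ℕ → E := fun n => u n - x with hwdef
  have hwk : ∀ φ : E →L[ℝ] ℝ, Tendsto (fun n => φ (w n)) atTop (nhds 0) := by
    intro φ
    have h := (hw φ).sub_const (φ x)
    simpa [hwdef, map_sub] using h
  obtain ⟨δ, hδ, hfreq⟩ : ∃ δ > 0, ∀ N, ∃ n ≥ N, δ ≤ ‖w n‖ := by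
    rw [Metric.tendsto_atTop] at hnot
    push_neg at hnot
    obtain ⟨ε, hε, hN⟩ := hnot
    refine ⟨ε, hε, fun N => ?_⟩
    obtain ⟨n, hn, h⟩ := hN N
    exact ⟨n, hn, by simpa [Real.dist_eq, abs_of_nonneg (norm_nonneg _)] using h⟩
  -- recursive selection
  have step : ∀ k prev : ℕ, ∃ n ≥ prev + 1, δ ≤ ‖w n‖ ∧
      ∀ y ∈ Submodule.span ℝ (w '' Set.Iic prev), ∀ lam : ℝ,
        ‖y‖ ≤ (1 + 1/2^(k+3)) * ‖y + lam • w n‖ := by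
    intro k prev
    haveI := FiniteDimensional.span_of_finite ℝ ((Set.finite_Iic prev).image w)
    have h1 : (0:ℝ) < 1/2^(k+3) := by positivity
    have h2 : (1:ℝ)/2^(k+3) ≤ 1 := by
      rw [div_le_one (by positivity)]
      exact one_le_pow₀ one_le_two
    exact mazur_step w hwk hδ hfreq (Submodule.span ℝ (w '' Set.Iic prev)) h1 h2 (prev+1)
  let ψ : ℕ → ℕ := fun k => Nat.rec ((hfreq 0).choose) (fun k prev => (step k prev).choose) k
  have hψ0 : δ ≤ ‖w (ψ 0)‖ := (hfreq 0).choose_spec.2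
  have hψsucc : ∀ k, ψ k + 1 ≤ ψ (k+1) ∧ δ ≤ ‖w (ψ (k+1))‖ ∧
      ∀ y ∈ Submodule.span ℝ (w '' Set.Iic (ψ k)), ∀ lam : ℝ,
        ‖y‖ ≤ (1 + 1/2^(k+3)) * ‖y + lam • w (ψ (k+1))‖ := by
    intro k
    exact (step k (ψ k)).choose_spec
  have hψmono : StrictMono ψ := strictMono_nat_of_lt_succ (fun k => (hψsucc k).1)
  set v : ℕ → E := fun k => w (ψ k) with hvdef
  have hvweak : ∀ φ : E →L[ℝ] ℝ, Tendsto (fun n => φ (v n)) atTop (nhds 0) :=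
    fun φ => (hwk φ).comp hψmono.tendsto_atTop
  refine ⟨v, hvweak, ⟨δ, hδ, fun n => by cases n with
    | zero => exact hψ0
    | succ k => exact (hψsucc k).2.1⟩, ⟨2, one_le_two, ?_⟩, ?_⟩
  · -- basis constant
    intro m a n hnm
    set b : ℕ → ℝ := fun i => if h : i < m then a ⟨i, h⟩ else 0 with hbdef
    set T : ℕ → E := fun n => ∑ i ∈ Finset.range n, b i • v i with hTdef
    have hTm : ∑ i : Fin m, a i • v i = T m := by
      show ∑ i : Fin m, a i • v ↑i = ∑ i ∈ Finset.range m, b i • v i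
      rw [← Fin.sum_univ_eq_sum_range (fun i => b i • v i) m]
      exact Finset.sum_congr rfl fun i _ => by simp [hbdef, i.isLt]
    have hTn : (∑ i : Fin m, if (i:ℕ) < n then a i • v i else 0) = T n := by
      have h1 : (∑ i : Fin m, if (i:ℕ) < n then a i • v i else 0)
          = ∑ i ∈ Finset.range m, (if i < n then b i • v i else 0) := by
        rw [← Fin.sum_univ_eq_sum_range (fun i => if i < n then b i • v i else 0) m]
        refine Finset.sum_congr rfl fun i _ => ?_
        by_cases h : (i:ℕ) < n <;> simp [h, hbdef, i.isLt]
      have h2 := Finset.sum_subset (f := fun i => if i < n then b i • v i else 0)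
        (Finset.range_subset_range.mpr hnm)
        (fun i _ hni => if_neg (by simpa using hni))
      rw [h1, ← h2]
      show (∑ i ∈ Finset.range n, if i < n then b i • v i else 0)
          = ∑ i ∈ Finset.range n, b i • v i
      exact Finset.sum_congr rfl fun i hi => if_pos (Finset.mem_range.mp hi)
    have hstep : ∀ j, ‖T j‖ ≤ (1 + 1/2^(j+2)) * ‖T (j+1)‖ := by
      intro j
      have hT1 : T (j+1) = T j + b j • v j := Finset.sum_range_succ _ _
      cases j with
      | zero =>
        rw [show T 0 = 0 from Finset.sum_range_zero _, norm_zero]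
        positivity
      | succ k =>
        have hmem : T (k+1) ∈ Submodule.span ℝ (w '' Set.Iic (ψ k)) := by
          apply Submodule.sum_mem
          intro i hi
          refine Submodule.smul_mem _ _ (Submodule.subset_span ?_)
          exact ⟨ψ i, hψmono.monotone (Nat.lt_succ_iff.mp (Finset.mem_range.mp hi)), rfl⟩
        have h := (hψsucc k).2.2 _ hmem (b (k+1))
        have hv : w (ψ (k+1)) = v (k+1) := rfl
        rw [hv, ← hT1] at h
        exact h
    have htel : ∀ d n, ‖T n‖ ≤ (1 + 1/2^n) * ‖T (n + d)‖ := by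
      intro d
      induction d with
      | zero =>
        intro n
        simp only [Nat.add_zero]
        have : (0:ℝ) < 1/2^n := by positivity
        nlinarith [norm_nonneg (T n)]
      | succ d ih =>
        intro n
        have h1 := hstep n
        have h2 := ih (n+1)
        have h3 : n + 1 + d = n + (d + 1) := by omega
        rw [h3] at h2
        have hTn0 := norm_nonneg (T (n + (d+1)))
        have hTn1 := norm_nonneg (T (n+1))
        have hp : (1:ℝ) ≤ 2^n := one_le_pow₀ one_le_two
        have e1 : (2:ℝ)^(n+1) = 2 * 2^n := by rw [pow_succ]; ring
        have e2 : (2:ℝ)^(n+2) = 4 * 2^n := by rw [pow_succ, pow_succ]; ring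
        have hq : (0:ℝ) < 2^n := by positivity
        have hkey : ∀ p : ℝ, 1 ≤ p → (1 + 1/(4*p)) * (1 + 1/(2*p)) ≤ 1 + 1/p := by
          intro p hp1
          have hp0 : (0:ℝ) < p := lt_of_lt_of_le one_pos hp1
          have hp' : p ≠ 0 := hp0.ne'
          have ha : (1 + 1/(4*p)) * (1 + 1/(2*p)) = ((4*p+1)*(2*p+1))/(8*p^2) := by
            field_simp; ring
          have hb : (1:ℝ) + 1/p = (p+1)/p := by field_simp
          rw [ha, hb, div_le_div_iff₀ (by positivity) (by positivity)]
          nlinarith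
        have hprod : ((1:ℝ) + 1/2^(n+2)) * (1 + 1/2^(n+1)) ≤ 1 + 1/2^n := by
          rw [e1, e2]
          exact hkey (2^n) hp
        calc ‖T n‖ ≤ (1 + 1/2^(n+2)) * ‖T (n+1)‖ := h1
          _ ≤ (1 + 1/2^(n+2)) * ((1 + 1/2^(n+1)) * ‖T (n + (d+1))‖) := by
              apply mul_le_mul_of_nonneg_left h2 (by positivity)
          _ = ((1 + 1/2^(n+2)) * (1 + 1/2^(n+1))) * ‖T (n + (d+1))‖ := by ring
          _ ≤ (1 + 1/2^n) * ‖T (n + (d+1))‖ :=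
              mul_le_mul_of_nonneg_right hprod hTn0
    have hfin := htel (m - n) n
    rw [show n + (m - n) = m by omega] at hfin
    rw [hTn, hTm]
    have h12 : (1:ℝ) + 1/2^n ≤ 2 := by
      have hp : (1:ℝ) ≤ 2^n := one_le_pow₀ one_le_two
      have : (1:ℝ)/2^n ≤ 1 := by
        rw [div_le_one (by positivity)]; exact hp
      linarith
    calc ‖T n‖ ≤ (1 + 1/2^n) * ‖T m‖ := hfin
      _ ≤ 2 * ‖T m‖ := mul_le_mul_of_nonneg_right h12 (norm_nonneg _)
  · -- no ℓ₁ subsequence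
    rintro ⟨φ, hφ, c, hc, C, hC, hl1⟩
    set y : ℕ → E := fun k => v (φ k) with hydef
    have hyweak : ∀ f : E →L[ℝ] ℝ, Tendsto (fun k => f (y k)) atTop (nhds 0) :=
      fun f => (hvweak f).comp hφ.tendsto_atTop
    have hhull : ∀ z ∈ convexHull ℝ (Set.range y), c ≤ ‖z‖ := by
      intro z hz
      rw [convexHull_eq] at hz
      obtain ⟨ι, t, wt, zt, hw0, hw1, hzs, hcm⟩ := hz
      set g : ι → ℕ := fun i => if h : i ∈ t then (hzs i h).choose else 0 with hgdef
      have hg : ∀ i ∈ t, y (g i) = zt i := by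
        intro i hi
        simp only [hgdef, dif_pos hi]
        exact (hzs i hi).choose_spec
      set l : ℕ := t.sup g + 1 with hldef
      have hgl : ∀ i ∈ t, g i ∈ Finset.range l := by
        intro i hi
        rw [Finset.mem_range, hldef]
        exact Nat.lt_succ_of_le (Finset.le_sup hi)
      set lamN : ℕ → ℝ := fun k => ∑ i ∈ t.filter (fun i => g i = k), wt i with hlamdef
      have hnonneg : ∀ k, 0 ≤ lamN k := fun k =>
        Finset.sum_nonneg fun i hi => hw0 i (Finset.mem_filter.mp hi).1
      have h1 : ∑ k ∈ Finset.range l, lamN k = 1 := by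
        rw [hlamdef]
        rw [Finset.sum_fiberwise_of_maps_to hgl wt]
        exact hw1
      have hcm' : z = ∑ i ∈ t, wt i • zt i := by
        rw [← hcm, Finset.centerMass_eq_of_sum_1 t zt hw1]
      have h2 : ∑ k ∈ Finset.range l, lamN k • y k = z := by
        rw [hcm', ← Finset.sum_fiberwise_of_maps_to hgl (fun i => wt i • zt i)]
        refine Finset.sum_congr rfl fun k _ => ?_
        rw [hlamdef, Finset.sum_smul]
        refine Finset.sum_congr rfl fun i hi => ?_
        obtain ⟨hit, hgi⟩ := Finset.mem_filter.mp hi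
        rw [← hg i hit, hgi]
      have := (hl1 l (fun k => lamN k)).1
      rw [Fin.sum_univ_eq_sum_range (fun k => |lamN k|) l] at this
      rw [Fin.sum_univ_eq_sum_range (fun k => lamN k • y k) l] at this
      have habs : ∑ k ∈ Finset.range l, |lamN k| = 1 := by
        rw [← h1]
        exact Finset.sum_congr rfl fun k _ => abs_of_nonneg (hnonneg k)
      rw [habs, h2, mul_one] at this
      exact this
    have h0 : (0:E) ∉ closure (convexHull ℝ (Set.range y)) := by
      intro h
      have hcl : IsClosed {z : E | c ≤ ‖z‖} := isClosed_le continuous_const continuous_norm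
      have hsubset : convexHull ℝ (Set.range y) ⊆ {z : E | c ≤ ‖z‖} := hhull
      have := closure_minimal hsubset hcl h
      simp only [Set.mem_setOf_eq, norm_zero] at this
      linarith
    obtain ⟨f, r, hfs, hr⟩ := geometric_hahn_banach_closed_point
      ((convex_convexHull ℝ _).closure) isClosed_closure h0
    have hfy : ∀ k, f (y k) < r := fun k =>
      hfs _ (subset_closure (subset_convexHull ℝ _ (Set.mem_range_self k)))
    have hle : (0:ℝ) ≤ r := le_of_tendsto (hyweak f) (Eventually.of_forall fun k => (hfy k).le)
    rw [map_zero] at hr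
    linarith
end

section
/- For every set Γ, the Banach space C([-1,1]^Γ) has the separable complementation property: for every separable closed subspace G of C([-1,1]^Γ) there exists a separable complemented closed subspace G₀ of C([-1,1]^Γ) containing G, and moreover G₀ is isometrically isomorphic to C([-1,1]^A) for some countable A ⊂ Γ. -/
/-!
A continuous function on a product of compact spaces is, up to `ε`, a function of finitely many
coordinates (cover the product by finitely many basic boxes), hence exactly a function of countably
many. A countable set `c` whose closure contains `G` therefore only involves the coordinates in a
countable `A ⊆ Γ`. Restriction `ρ : [-1,1]^Γ → [-1,1]^A` has a continuous right inverse (extension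
by `0`), so `h ↦ h ∘ ρ` is an isometric embedding of `C([-1,1]^A)` with a continuous linear left
inverse. Its range `G₀` is closed, complemented and separable, and contains `c`, hence `G`.
-/

open Function Set TopologicalSpace

namespace ContinuousMap

section CompRight

variable (R E : Type*) {X Y : Type*} [TopologicalSpace X] [TopologicalSpace Y] [Ring R]
  [TopologicalSpace E] [AddCommGroup E] [IsTopologicalAddGroup E] [Module R E]
  [ContinuousConstSMul R E]

def compRightL (f : C(X, Y)) : C(Y, E) →L[R] C(X, E) where
  toFun g := g.comp f
  map_add' _ _ := rfl
  map_smul' _ _ := rfl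
  cont := continuous_precomp f

variable {R E} {ρ : C(X, Y)} {σ : C(Y, X)}

lemma leftInverse_compRightL (h : LeftInverse ρ σ) :
    LeftInverse (compRightL R E σ) (compRightL R E ρ) :=
  fun g ↦ ext fun y ↦ congrArg g (h y)

lemma closedComplemented_range_compRightL (h : LeftInverse ρ σ) :
    (compRightL R E ρ).range.ClosedComplemented :=
  ContinuousLinearMap.closedComplemented_range_of_leftInverse _ _ (leftInverse_compRightL h)

lemma isClosed_range_compRightL [T2Space E] (h : LeftInverse ρ σ) :
    IsClosed ((compRightL R E ρ).range : Set C(X, E)) :=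
  ContinuousLinearMap.HasLeftInverse.isClosed_range ⟨_, leftInverse_compRightL h⟩

lemma mem_range_compRightL (h : LeftInverse ρ σ) {g : C(X, E)} (hg : FactorsThrough g ρ) :
    g ∈ (compRightL R E ρ).range :=
  ⟨g.comp σ, ext fun x ↦ hg (h (ρ x))⟩

end CompRight

section Isometry

variable (𝕜 E : Type*) {X Y : Type*} [TopologicalSpace X] [CompactSpace X] [TopologicalSpace Y]
  [CompactSpace Y] [NormedField 𝕜] [NormedAddCommGroup E] [NormedSpace 𝕜 E]

lemma norm_comp_of_surjective (g : C(Y, E)) {f : C(X, Y)} (hf : Surjective f) :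
    ‖g.comp f‖ = ‖g‖ := by
  simp only [norm_eq_iSup_norm]
  exact hf.iSup_comp fun y ↦ ‖g y‖

def compRightₗᵢ (f : C(X, Y)) (hf : Surjective f) : C(Y, E) →ₗᵢ[𝕜] C(X, E) where
  toLinearMap := compRightL 𝕜 E f
  norm_map' g := norm_comp_of_surjective E g hf

end Isometry

section Pi

variable {ι : Type*} {X : ι → Type*} [∀ i, TopologicalSpace (X i)]

def piRestrict (s : Set ι) : C((∀ i, X i), ∀ i : s, X i) :=
  ⟨s.domRestrict, Pi.continuous_domRestrict s⟩

open Classical in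
noncomputable def piExtend (s : Set ι) (x₀ : ∀ i, X i) : C((∀ i : s, X i), ∀ i, X i) where
  toFun y i := if h : i ∈ s then y ⟨i, h⟩ else x₀ i
  continuous_toFun := continuous_pi fun i ↦ by split_ifs <;> fun_prop

lemma leftInverse_piRestrict_piExtend (s : Set ι) (x₀ : ∀ i, X i) :
    LeftInverse (piRestrict s) (piExtend s x₀) :=
  fun _ ↦ funext fun i ↦ dif_pos i.2

variable [∀ i, CompactSpace (X i)] {Y : Type*}

lemma exists_finset_forall_dist_lt [PseudoMetricSpace Y] (f : C((∀ i, X i), Y)) {ε : ℝ}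
    (hε : 0 < ε) :
    ∃ F : Finset ι, ∀ x y : ∀ i, X i, (∀ i ∈ F, x i = y i) → dist (f x) (f y) < ε := by
  classical
  have hbox : ∀ x : ∀ i, X i, ∃ (F : Finset ι) (u : ∀ i, Set (X i)),
      (∀ i ∈ F, IsOpen (u i) ∧ x i ∈ u i) ∧ (F : Set ι).pi u ⊆ f ⁻¹' Metric.ball (f x) (ε / 2) :=
    fun x ↦ isOpen_pi_iff.mp (Metric.isOpen_ball.preimage f.continuous) x
      (Metric.mem_ball_self (half_pos hε))
  choose F u hu hsub using hbox
  obtain ⟨t, -, hcover⟩ := isCompact_univ.elim_nhds_subcover (fun x ↦ (F x : Set ι).pi (u x))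
    fun x _ ↦ (isOpen_set_pi (F x).finite_toSet fun i hi ↦ (hu x i hi).1).mem_nhds
      fun i hi ↦ (hu x i hi).2
  refine ⟨t.biUnion F, fun x y hxy ↦ ?_⟩
  obtain ⟨z, hz, hxz⟩ := mem_iUnion₂.mp (hcover (mem_univ x))
  have hyz : y ∈ (F z : Set ι).pi (u z) := fun i hi ↦
    hxy i (Finset.mem_biUnion.mpr ⟨z, hz, hi⟩) ▸ hxz i hi
  have hx := Metric.mem_ball.mp (hsub z hxz)
  have hy := Metric.mem_ball.mp (hsub z hyz)
  linarith [dist_triangle_right (f x) (f y) (f z)]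

lemma exists_countable_dependsOn [MetricSpace Y] (f : C((∀ i, X i), Y)) :
    ∃ s : Set ι, s.Countable ∧ DependsOn f s := by
  choose F hF using fun n : ℕ ↦ exists_finset_forall_dist_lt f (Nat.one_div_pos_of_nat (n := n))
  refine ⟨⋃ n, F n, countable_iUnion fun n ↦ (F n).countable_toSet, fun x y hxy ↦ ?_⟩
  refine eq_of_forall_dist_le fun ε hε ↦ ?_
  obtain ⟨n, hn⟩ := exists_nat_one_div_lt hε
  exact (hF n x y fun i hi ↦ hxy i (mem_iUnion.mpr ⟨n, hi⟩)).le.trans hn.le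

end Pi

end ContinuousMap

open ContinuousMap

theorem stmt5_general {Γ : Type*}
    (G : Submodule ℝ C((Γ → Set.Icc (-1:ℝ) 1), ℝ))
    (hGsep : TopologicalSpace.SeparableSpace G) :
    ∃ G₀ : Submodule ℝ C((Γ → Set.Icc (-1:ℝ) 1), ℝ),
      G ≤ G₀ ∧
      IsClosed (G₀ : Set C((Γ → Set.Icc (-1:ℝ) 1), ℝ)) ∧
      TopologicalSpace.SeparableSpace G₀ ∧
      G₀.ClosedComplemented ∧
      ∃ A : Set Γ, A.Countable ∧
        Nonempty (G₀ ≃ₗᵢ[ℝ] C((A → Set.Icc (-1:ℝ) 1), ℝ)) := by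
  obtain ⟨c, hc, hGc⟩ := IsSeparable.of_subtype (G : Set C((Γ → Set.Icc (-1:ℝ) 1), ℝ))
  choose B hB hdep using fun f : C((Γ → Set.Icc (-1:ℝ) 1), ℝ) ↦ f.exists_countable_dependsOn
  set A : Set Γ := ⋃ f ∈ c, B f
  have hA : A.Countable := hc.biUnion fun f _ ↦ hB f
  have hρ := leftInverse_piRestrict_piExtend A fun _ ↦ (⟨0, by norm_num⟩ : Set.Icc (-1:ℝ) 1)
  set G₀ := (compRightL ℝ ℝ (piRestrict (X := fun _ ↦ Set.Icc (-1:ℝ) 1) A)).range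
  have hG₀ : IsClosed (G₀ : Set C((Γ → Set.Icc (-1:ℝ) 1), ℝ)) := isClosed_range_compRightL hρ
  have hcG₀ : c ⊆ G₀ := fun f hf ↦ mem_range_compRightL hρ <| dependsOn_iff_factorsThrough.mp <|
    (hdep f).mono (subset_biUnion_of_mem hf)
  let e := (compRightₗᵢ ℝ ℝ (piRestrict A) hρ.surjective).equivRange
  have : Countable A := hA.to_subtype
  exact ⟨G₀, hGc.trans (closure_minimal hcG₀ hG₀), hG₀,
    e.surjective.denseRange.separableSpace e.continuous,
    closedComplemented_range_compRightL hρ, A, hA, ⟨e.symm⟩⟩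

/-- `C([-1,1]^Γ)` has the separable complementation property: every separable
closed subspace `G` is contained in a separable closed complemented subspace `G₀`, which is
moreover isometrically isomorphic to `C([-1,1]^A)` for some countable `A ⊆ Γ`. -/
theorem stmt5 {Γ : Type*}
    (G : Submodule ℝ C((Γ → Set.Icc (-1:ℝ) 1), ℝ))
    (hGc : IsClosed (G : Set C((Γ → Set.Icc (-1:ℝ) 1), ℝ)))
    (hGsep : TopologicalSpace.SeparableSpace G) :
    ∃ G₀ : Submodule ℝ C((Γ → Set.Icc (-1:ℝ) 1), ℝ),
      G ≤ G₀ ∧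
      IsClosed (G₀ : Set C((Γ → Set.Icc (-1:ℝ) 1), ℝ)) ∧
      TopologicalSpace.SeparableSpace G₀ ∧
      G₀.ClosedComplemented ∧
      ∃ A : Set Γ, A.Countable ∧
        Nonempty (G₀ ≃ₗᵢ[ℝ] C((A → Set.Icc (-1:ℝ) 1), ℝ)) :=
  stmt5_general G hGsep
end

section
/- (Mibu's theorem, countable-support version) Let Γ be a set and f ∈ C([-1,1]^Γ) a continuous real-valued function on the product [-1,1]^Γ. Then there exists a countable subset A ⊂ Γ such that f(x) = f(y) whenever x, y ∈ [-1,1]^Γ satisfy x|_A = y|_A. -/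
/-- Mibu's theorem: every continuous `f : [-1,1]^Γ → ℝ` depends on countably
many coordinates: there is a countable `A ⊆ Γ` with `f x = f y` whenever `x|_A = y|_A`. -/
theorem stmt6 {Γ : Type*} (f : C((Γ → Set.Icc (-1:ℝ) 1), ℝ)) :
    ∃ A : Set Γ, A.Countable ∧
      ∀ x y : Γ → Set.Icc (-1:ℝ) 1, (∀ a ∈ A, x a = y a) → f x = f y := by
  have hf : UniformContinuous f := CompactSpace.uniformContinuous_of_continuous f.continuous
  have key : ∀ n : ℕ, ∃ t : Set Γ, t.Countable ∧
      ∀ x y : Γ → Set.Icc (-1:ℝ) 1, (∀ a ∈ t, x a = y a) →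
        dist (f x) (f y) < 1/(n+1) := by
    intro n
    have hε : (0:ℝ) < 1/(n+1) := by positivity
    have hU : (Prod.map f f) ⁻¹' {p : ℝ × ℝ | dist p.1 p.2 < 1/(n+1)}
        ∈ uniformity (Γ → Set.Icc (-1:ℝ) 1) := hf (Metric.dist_mem_uniformity hε)
    rw [Pi.uniformity, Filter.mem_iInf] at hU
    obtain ⟨I, hIfin, V, hV, hUeq⟩ := hU
    refine ⟨I, hIfin.countable, fun x y hxy => ?_⟩
    have hmem : (x, y) ∈ (Prod.map f f) ⁻¹' {p : ℝ × ℝ | dist p.1 p.2 < 1/(n+1)} := by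
      rw [hUeq]
      refine Set.mem_iInter.mpr fun i => ?_
      obtain ⟨W, hW, hWsub⟩ := hV i
      apply hWsub
      have : x i.1 = y i.1 := hxy i.1 i.2
      simp only [Set.mem_preimage, this]
      exact refl_mem_uniformity hW
    exact hmem
  choose t ht htf using key
  refine ⟨⋃ n, t n, Set.countable_iUnion ht, fun x y hxy => ?_⟩
  have : ∀ n : ℕ, dist (f x) (f y) < 1/(n+1) := fun n =>
    htf n x y fun a ha => hxy a (Set.mem_iUnion.mpr ⟨n, ha⟩)
  by_contra h
  have hd : 0 < dist (f x) (f y) := dist_pos.mpr h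
  obtain ⟨n, hn⟩ := exists_nat_one_div_lt hd
  exact absurd (this n) (not_lt.mpr hn.le)
end

section
/- Let Γ be a set and suppose g : [-1,1]^Γ → ℝ is continuous, positively homogeneous (g(λx) = λ g(x) for all 0 < λ ≤ 1 and x with λx in the cube), and depends on finitely many coordinates (there is a finite F ⊂ Γ with g(x) = g(y) whenever x|_F = y|_F). Then g has finite FBL(Γ)-norm: ‖g‖ = sup { Σ_{k=1}^m |g(x_k*)| : m ∈ ℕ, x_k* ∈ [-1,1]^Γ, sup_{a∈Γ} Σ_{k=1}^m |x_k*(a)| ≤ 1 } < ∞. -/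
/-- A continuous, positively homogeneous function on `[-1,1]^Γ` depending only
on finitely many coordinates has finite FBL(Γ)-norm: the defining set of sums is bounded. -/
theorem stmt14 {Γ : Type*} (g : (Γ → Set.Icc (-1:ℝ) 1) → ℝ)
    (hcont : Continuous g)
    (hhom : ∀ (l : ℝ) (h0 : 0 < l) (h1 : l ≤ 1) (x : Γ → Set.Icc (-1:ℝ) 1),
      g (fun a => ⟨l * (x a : ℝ), by
        obtain ⟨ha, hb⟩ := (x a).2
        exact Set.mem_Icc.mpr ⟨by nlinarith, by nlinarith⟩⟩) = l * g x)
    (hfin : ∃ F : Finset Γ, ∀ x y : Γ → Set.Icc (-1:ℝ) 1,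
      (∀ a ∈ F, x a = y a) → g x = g y) :
    ∃ N : ℝ, ∀ (m : ℕ) (z : Fin m → (Γ → Set.Icc (-1:ℝ) 1)),
      (∀ a : Γ, ∑ k, |(z k a : ℝ)| ≤ 1) → ∑ k, |g (z k)| ≤ N := by
  classical
  obtain ⟨F, hF⟩ := hfin
  set z0 : Γ → Set.Icc (-1:ℝ) 1 := fun _ => ⟨0, by norm_num⟩ with hz0
  obtain ⟨M, hM⟩ : ∃ M, ∀ x, |g x| ≤ M := by
    obtain ⟨x0, -, hx0⟩ := isCompact_univ.exists_isMaxOn ⟨z0, trivial⟩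
      ((continuous_abs.comp hcont).continuousOn)
    exact ⟨|g x0|, fun x => hx0 (Set.mem_univ x)⟩
  have hM0 : 0 ≤ M := le_trans (abs_nonneg _) (hM z0)
  have hg0 : g z0 = 0 := by
    have h := hhom (1/2) (by norm_num) (by norm_num) z0
    have e : g z0 = 1/2 * g z0 := by
      rw [← h]; congr 1; funext a; exact Subtype.ext (by simp [z0])
    linarith
  have key : ∀ x : Γ → Set.Icc (-1:ℝ) 1, |g x| ≤ M * ∑ a ∈ F, |(x a : ℝ)| := by
    intro x
    set S := ∑ a ∈ F, |(x a : ℝ)| with hS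
    have hS0 : 0 ≤ S := Finset.sum_nonneg (fun a _ => abs_nonneg _)
    rcases eq_or_lt_of_le hS0 with h0 | hpos
    · have hall : ∀ a ∈ F, (x a : ℝ) = 0 := by
        intro a ha
        exact abs_eq_zero.mp
          ((Finset.sum_eq_zero_iff_of_nonneg (fun a _ => abs_nonneg _)).mp h0.symm a ha)
      have hx0 : g x = g z0 := hF x z0 (fun a ha => Subtype.ext (by simp [z0, hall a ha]))
      rw [hx0, hg0, ← h0]
      simp
    · set l := min S 1 with hl
      have hl0 : 0 < l := lt_min hpos one_pos
      have hl1 : l ≤ 1 := min_le_right _ _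
      have hxa : ∀ a ∈ F, |(x a : ℝ)| ≤ l := by
        intro a ha
        refine le_min ?_ ?_
        · rw [hS]; exact Finset.single_le_sum (f := fun b => |(x b : ℝ)|) (fun b _ => abs_nonneg _) ha
        have := (x a).2
        rw [abs_le]; exact ⟨this.1, this.2⟩
      set y : Γ → Set.Icc (-1:ℝ) 1 := fun a =>
        if ha : a ∈ F then ⟨(x a : ℝ) / l, by
          rw [Set.mem_Icc, ← abs_le, abs_div, abs_of_pos hl0]
          exact (div_le_one hl0).mpr (hxa a ha)⟩
        else ⟨0, by norm_num⟩ with hy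
      have h := hhom l hl0 hl1 y
      have e : g x = l * g y := by
        rw [← h]
        apply hF
        intro a ha
        apply Subtype.ext
        simp only [y, ha, dif_pos]
        field_simp
      rw [e, abs_mul, abs_of_pos hl0]
      calc l * |g y| ≤ l * M := by nlinarith [hM y, hl0.le]
        _ ≤ S * M := by nlinarith [min_le_left S 1]
        _ = M * S := mul_comm _ _
  refine ⟨M * F.card, ?_⟩
  intro m z hz
  calc ∑ k, |g (z k)| ≤ ∑ k, M * ∑ a ∈ F, |(z k a : ℝ)| :=
        Finset.sum_le_sum (fun k _ => key (z k))
    _ = M * ∑ a ∈ F, ∑ k, |(z k a : ℝ)| := by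
        rw [← Finset.mul_sum, Finset.sum_comm]
    _ ≤ M * ∑ a ∈ F, (1:ℝ) :=
        mul_le_mul_of_nonneg_left (Finset.sum_le_sum (fun a _ => hz a)) hM0
    _ = M * F.card := by simp
end
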